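/- Let (X,σ) be a Deaconu-Renault system on a metric space (X,d) and let K ⊆ X be a compact open set. Then for each ε > 0 and n ∈ ℕ: (1) sep(n,ε,σ,K ∩ Dom(σ^{n−1})) ≤ sep(n,ε,σ,K ∩ cl(Dom(σ^{n−1}))) ≤ sep(n,ε/2,σ,K ∩ Dom(σ^{n−1})); (2) span(n,ε,σ,K ∩ cl(Dom(σ^{n−1}))) ≤ span(n,ε,σ,K ∩ Dom(σ^{n−1})), where cl denotes topological closure. -/
import Mathlib


open Set Filter Topology
open scoped ENNReal NNReal

/-- A Deaconu-Renault system: a local homeomorphism `σ` from an open subset `dom` of `X`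
onto an open subset of `X`. (The underlying space is assumed locally compact Hausdorff in
the theorems.) -/
structure DRSystem (X : Type*) [TopologicalSpace X] where
  toFun : X → X
  dom : Set X
  isOpen_dom : IsOpen dom
  isOpen_image : IsOpen (toFun '' dom)
  isLocalHomeomorphOn : IsLocalHomeomorphOn toFun dom

namespace DRSystem

variable {X Y : Type*} [TopologicalSpace X] [TopologicalSpace Y]

/-- `Dom(σⁿ)`, defined inductively by `Dom(σ⁰) = X` and `Dom(σⁿ⁺¹) = σ⁻¹(Dom(σⁿ))`
(preimage of the partial map `σ`). -/
def domN (S : DRSystem X) : ℕ → Set X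
  | 0 => Set.univ
  | n + 1 => S.dom ∩ S.toFun ⁻¹' S.domN n

/-- `I_n(x) = {i ∈ {0,…,n−1} : x ∈ Dom(σ^i)}`. -/
def IN (S : DRSystem X) (n : ℕ) (x : X) : Set ℕ :=
  {i : ℕ | i < n ∧ x ∈ S.domN i}

/-- `d_n(x,y) = max_{i ∈ I_n(x) ∩ I_n(y)} ρ(σ^i x, σ^i y)`, for a metric `ρ`. -/
noncomputable def dN (S : DRSystem X) (ρ : X → X → ℝ) (n : ℕ) (x y : X) : ℝ :=
  sSup ((fun i => ρ (S.toFun^[i] x) (S.toFun^[i] y)) '' (S.IN n x ∩ S.IN n y))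

/-- `A` is an `(n,ε,σ,Z)`-separated set. -/
def IsSep (S : DRSystem X) (ρ : X → X → ℝ) (n : ℕ) (ε : ℝ) (Z A : Set X) : Prop :=
  A ⊆ Z ∧ A.Pairwise fun x y => ε < S.dN ρ n x y

/-- `B` is an `(n,ε,σ,Z)`-spanning set. -/
def IsSpan (S : DRSystem X) (ρ : X → X → ℝ) (n : ℕ) (ε : ℝ) (Z B : Set X) : Prop :=
  B ⊆ Z ∧ ∀ x ∈ Z, ∃ y ∈ B, S.dN ρ n x y ≤ ε

/-- `sep(n,ε,σ,Z)`: the largest cardinality of an `(n,ε,σ,Z)`-separated set. -/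
noncomputable def sep (S : DRSystem X) (ρ : X → X → ℝ) (n : ℕ) (ε : ℝ) (Z : Set X) : ℕ∞ :=
  ⨆ (A : Set X) (_ : S.IsSep ρ n ε Z A), A.encard

/-- `span(n,ε,σ,Z)`: the smallest cardinality of an `(n,ε,σ,Z)`-spanning set. -/
noncomputable def span (S : DRSystem X) (ρ : X → X → ℝ) (n : ℕ) (ε : ℝ) (Z : Set X) : ℕ∞ :=
  ⨅ (B : Set X) (_ : S.IsSpan ρ n ε Z B), B.encard

/-- `ssep(n,ε,σ,K) = sup_F sep(n,ε,σ,K∩F)`, over closed `F ⊆ Dom(σ^{n-1})`. -/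
noncomputable def ssep (S : DRSystem X) (ρ : X → X → ℝ) (n : ℕ) (ε : ℝ) (K : Set X) : ℕ∞ :=
  ⨆ (F : Set X) (_ : IsClosed F ∧ F ⊆ S.domN (n - 1)), S.sep ρ n ε (K ∩ F)

/-- `sspan(n,ε,σ,K) = sup_F span(n,ε,σ,K∩F)`, over closed `F ⊆ Dom(σ^{n-1})`. -/
noncomputable def sspan (S : DRSystem X) (ρ : X → X → ℝ) (n : ℕ) (ε : ℝ) (K : Set X) : ℕ∞ :=
  ⨆ (F : Set X) (_ : IsClosed F ∧ F ⊆ S.domN (n - 1)), S.span ρ n ε (K ∩ F)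

/-- The metric entropy `h_ρ(σ) = sup_K lim_{ε→0} limsup_n (1/n) log ssep(n,ε,σ,K)`.
Since `ssep` (hence the inner quantity) is monotone nonincreasing in `ε`, the limit as
`ε → 0⁺` equals the supremum over `ε > 0`. -/
noncomputable def hMet (S : DRSystem X) (ρ : X → X → ℝ) : EReal :=
  ⨆ (K : Set X) (_ : IsCompact K), ⨆ (ε : ℝ) (_ : (0 : ℝ) < ε),
    Filter.atTop.limsup fun n : ℕ =>
      ((n : ℝ)⁻¹ : EReal) * ENNReal.log ((S.ssep ρ n ε K : ℕ∞) : ℝ≥0∞)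

/-- A conjugacy between Deaconu-Renault systems: a homeomorphism intertwining the
partial maps on their domains, in both directions. -/
def IsConjugacy (S : DRSystem X) (T : DRSystem Y) (φ : X ≃ₜ Y) : Prop :=
  (∀ x ∈ S.dom, T.toFun (φ x) = φ (S.toFun x)) ∧
  (∀ y ∈ T.dom, S.toFun (φ.symm y) = φ.symm (T.toFun y))

/-- A factor map between Deaconu-Renault systems: continuous, compact covering, surjective,
with `φ(Dom σ_X) ⊆ Dom σ_Y`, `σ_Y ∘ φ = φ ∘ σ_X` on `Dom σ_X`, and `φ⁻¹(Dom σ_Y) ⊆ Dom σ_X`. -/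
def IsFactorMap (S : DRSystem X) (T : DRSystem Y) (φ : X → Y) : Prop :=
  Continuous φ ∧
  (∀ K : Set Y, IsCompact K → ∃ C : Set X, IsCompact C ∧ φ '' C = K) ∧
  Function.Surjective φ ∧
  φ '' S.dom ⊆ T.dom ∧
  (∀ x ∈ S.dom, T.toFun (φ x) = φ (S.toFun x)) ∧
  φ ⁻¹' T.dom ⊆ S.dom

/-- `α` is an open cover of `K`. -/
def IsOpenCover (α : Set (Set X)) (K : Set X) : Prop :=
  (∀ A ∈ α, IsOpen A) ∧ K ⊆ ⋃₀ α

/-- `σ^{-i}(A)`: the preimage of `A` under the partial map `σ^i`. -/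
def preN (S : DRSystem X) (i : ℕ) (A : Set X) : Set X :=
  S.domN i ∩ S.toFun^[i] ⁻¹' A

/-- The join `α ∨ β` of two covers. -/
def covJoin (α β : Set (Set X)) : Set (Set X) :=
  Set.image2 (· ∩ ·) α β

/-- `α_n = α ∨ σ^{-1}(α) ∨ … ∨ σ^{-n}(α)`. -/
def covIter (S : DRSystem X) (α : Set (Set X)) (n : ℕ) : Set (Set X) :=
  {B | ∃ f : ℕ → Set X, (∀ i ≤ n, f i ∈ α) ∧ B = ⋂ i ∈ Finset.range (n + 1), S.preN i (f i)}

/-- `Y_n = Y ∩ σ^{-1}(Y) ∩ … ∩ σ^{-n}(Y)`. -/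
def setIter (S : DRSystem X) (Z : Set X) (n : ℕ) : Set X :=
  ⋂ i ∈ Finset.range (n + 1), S.preN i Z

/-- `N(α,Z)`: the smallest cardinality of a subcover of `α` covering `Z`. -/
noncomputable def Ncov (α : Set (Set X)) (Z : Set X) : ℕ∞ :=
  ⨅ (β : Set (Set X)) (_ : β ⊆ α ∧ Z ⊆ ⋃₀ β), β.encard

/-- `H(α,Z) = log N(α,Z)` (with `N = 1` when `Z = ∅`, following the paper's convention). -/
noncomputable def Hcov (α : Set (Set X)) (Z : Set X) : EReal :=
  ENNReal.log ((max 1 (Ncov α Z) : ℕ∞) : ℝ≥0∞)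

/-- `h(α,σ,K) = lim_n (1/n) H(α_n,K_n)` (expressed as a `limsup`; the limit exists). -/
noncomputable def hCov (S : DRSystem X) (α : Set (Set X)) (K : Set X) : EReal :=
  Filter.atTop.limsup fun n : ℕ =>
    ((n : ℝ)⁻¹ : EReal) * Hcov (S.covIter α n) (S.setIter K n)

/-- `h(σ,K) = sup_α h(α,σ,K)` over all open covers `α` of `K`. -/
noncomputable def hTopAt (S : DRSystem X) (K : Set X) : EReal :=
  ⨆ (α : Set (Set X)) (_ : IsOpenCover α K), S.hCov α K

/-- The topological entropy `h(σ) = sup_K h(σ,K)` over all compact `K ⊆ X`. -/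
noncomputable def hTop (S : DRSystem X) : EReal :=
  ⨆ (K : Set X) (_ : IsCompact K), S.hTopAt K

end DRSystem

namespace DRSystem

variable {X : Type*} [MetricSpace X] (S : DRSystem X)

lemma continuousOn_toFun' : ContinuousOn S.toFun S.dom :=
  fun _ hx => (S.isLocalHomeomorphOn.continuousAt hx).continuousWithinAt

lemma isOpen_domN' (i : ℕ) : IsOpen (S.domN i) := by
  induction i with
  | zero => exact isOpen_univ
  | succ i ih => exact S.continuousOn_toFun'.isOpen_inter_preimage S.isOpen_dom ih

lemma domN_succ_subset' (i : ℕ) : S.domN (i + 1) ⊆ S.domN i := by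
  induction i with
  | zero => intro x _; trivial
  | succ i ih => intro x hx; exact ⟨hx.1, ih hx.2⟩

lemma domN_subset' {i j : ℕ} (h : i ≤ j) : S.domN j ⊆ S.domN i := by
  induction j with
  | zero =>
    have : i = 0 := Nat.le_zero.mp h
    subst this; exact subset_rfl
  | succ j ih =>
    rcases Nat.eq_or_lt_of_le h with rfl | h'
    · exact subset_rfl
    · exact (S.domN_succ_subset' j).trans (ih (by omega))

lemma continuousOn_iterate' (i : ℕ) : ContinuousOn (S.toFun^[i]) (S.domN i) := by
  induction i with
  | zero => simpa using continuousOn_id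
  | succ i ih =>
    rw [Function.iterate_succ]
    exact ContinuousOn.comp ih (S.continuousOn_toFun'.mono fun x hx => hx.1) fun x hx => hx.2

lemma IN_inter_finite (n : ℕ) (x y : X) : (S.IN n x ∩ S.IN n y).Finite :=
  (Set.finite_Iio n).subset fun i hi => hi.1.1

lemma dN_nonneg (n : ℕ) (x y : X) : 0 ≤ S.dN dist n x y := by
  rcases Set.eq_empty_or_nonempty (S.IN n x ∩ S.IN n y) with h | h
  · simp [dN, h, Real.sSup_empty]
  · obtain ⟨i, hi⟩ := h
    exact le_trans dist_nonneg
      (le_csSup ((S.IN_inter_finite n x y).image _).bddAbove ⟨i, hi, rfl⟩)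

lemma dN_self (n : ℕ) (x : X) : S.dN dist n x x = 0 := by
  rcases Set.eq_empty_or_nonempty (S.IN n x ∩ S.IN n x) with h | h
  · simp [dN, h, Real.sSup_empty]
  · unfold dN
    have himg : (fun i => dist (S.toFun^[i] x) (S.toFun^[i] x)) '' (S.IN n x ∩ S.IN n x)
        = {(0 : ℝ)} := by
      simp only [dist_self]
      exact Set.Nonempty.image_const h 0
    rw [himg, csSup_singleton]

lemma dN_comm (n : ℕ) (x y : X) : S.dN dist n x y = S.dN dist n y x := by
  unfold dN
  rw [Set.inter_comm]
  have hfe : (fun i => dist (S.toFun^[i] x) (S.toFun^[i] y)) =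
      fun i => dist (S.toFun^[i] y) (S.toFun^[i] x) := funext fun i => dist_comm _ _
  rw [hfe]

lemma dN_le_add {n : ℕ} (hn : 1 ≤ n) {x x' y : X} (hx' : x' ∈ S.domN (n - 1))
    {δ : ℝ} (hδ : 0 ≤ δ)
    (h : ∀ i < n, x ∈ S.domN i → dist (S.toFun^[i] x) (S.toFun^[i] x') ≤ δ) :
    S.dN dist n x y ≤ S.dN dist n x' y + δ := by
  have hb : 0 ≤ S.dN dist n x' y + δ := add_nonneg (S.dN_nonneg n x' y) hδ
  unfold dN
  apply Real.sSup_le _ hb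
  rintro r ⟨i, ⟨hix, hiy⟩, rfl⟩
  have hiltn : i < n := hix.1
  have hxdom : x ∈ S.domN i := hix.2
  have hx'i : x' ∈ S.domN i := S.domN_subset' (by omega : i ≤ n - 1) hx'
  have hix' : i ∈ S.IN n x' := ⟨hiltn, hx'i⟩
  have hmem : dist (S.toFun^[i] x') (S.toFun^[i] y) ≤ S.dN dist n x' y :=
    le_csSup ((S.IN_inter_finite n x' y).image _).bddAbove ⟨i, ⟨hix', hiy⟩, rfl⟩
  calc dist (S.toFun^[i] x) (S.toFun^[i] y)
      ≤ dist (S.toFun^[i] x) (S.toFun^[i] x') + dist (S.toFun^[i] x') (S.toFun^[i] y) :=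
        dist_triangle _ _ _
    _ ≤ S.dN dist n x' y + δ := by
        have := h i hiltn hxdom
        linarith
  
lemma exists_approx (n : ℕ) {K : Set X} (hK : IsOpen K) {x : X}
    (hx : x ∈ K ∩ closure (S.domN (n - 1))) {δ : ℝ} (hδ : 0 < δ) :
    ∃ x' ∈ K ∩ S.domN (n - 1), ∀ i < n, x ∈ S.domN i →
      dist (S.toFun^[i] x) (S.toFun^[i] x') ≤ δ := by
  classical
  set J : Set ℕ := {i | i < n ∧ x ∈ S.domN i} with hJ
  have hJfin : J.Finite := (Set.finite_Iio n).subset fun i hi => hi.1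
  set U : Set X :=
    K ∩ ⋂ i ∈ J, (S.domN i ∩ S.toFun^[i] ⁻¹' Metric.ball (S.toFun^[i] x) δ) with hU
  have hUopen : IsOpen U := hK.inter (hJfin.isOpen_biInter fun i _ =>
    (S.continuousOn_iterate' i).isOpen_inter_preimage (S.isOpen_domN' i) Metric.isOpen_ball)
  have hxU : x ∈ U :=
    ⟨hx.1, Set.mem_biInter fun i hi => ⟨hi.2, Metric.mem_ball_self hδ⟩⟩
  obtain ⟨x', hx'U, hx'D⟩ := (mem_closure_iff.mp hx.2) U hUopen hxU
  refine ⟨x', ⟨hx'U.1, hx'D⟩, fun i hin hxd => ?_⟩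
  have hmem := Set.mem_iInter₂.mp hx'U.2 i (⟨hin, hxd⟩ : i ∈ J)
  have : dist (S.toFun^[i] x') (S.toFun^[i] x) < δ := hmem.2
  rw [dist_comm] at this
  exact this.le

end DRSystem

/-- for `K` compact open:
(1) `sep(n,ε,σ,K∩Dom(σ^{n-1})) ≤ sep(n,ε,σ,K∩cl(Dom(σ^{n-1}))) ≤ sep(n,ε/2,σ,K∩Dom(σ^{n-1}))`;
(2) `span(n,ε,σ,K∩cl(Dom(σ^{n-1}))) ≤ span(n,ε,σ,K∩Dom(σ^{n-1}))`. -/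
theorem statement5 {X : Type*} [MetricSpace X] [LocallyCompactSpace X]
    (S : DRSystem X) (K : Set X) (hKcpt : IsCompact K) (hKopen : IsOpen K)
    (ε : ℝ) (hε : 0 < ε) (n : ℕ) (hn : 1 ≤ n) :
    (S.sep dist n ε (K ∩ S.domN (n - 1)) ≤ S.sep dist n ε (K ∩ closure (S.domN (n - 1))) ∧
      S.sep dist n ε (K ∩ closure (S.domN (n - 1))) ≤ S.sep dist n (ε / 2) (K ∩ S.domN (n - 1))) ∧
    S.span dist n ε (K ∩ closure (S.domN (n - 1))) ≤ S.span dist n ε (K ∩ S.domN (n - 1)) := by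
  classical
  set D := S.domN (n - 1) with hD
  have hsub : K ∩ D ⊆ K ∩ closure D := Set.inter_subset_inter_right K subset_closure
  refine ⟨⟨?_, ?_⟩, ?_⟩
  · -- part (a)
    exact iSup₂_le fun A hA => le_iSup₂_of_le A ⟨hA.1.trans hsub, hA.2⟩ le_rfl
  · -- part (b)
    refine iSup₂_le fun A hA => ?_
    have hap : ∀ a ∈ A, ∃ x' ∈ K ∩ D, ∀ i < n, a ∈ S.domN i →
        dist (S.toFun^[i] a) (S.toFun^[i] x') ≤ ε / 4 :=
      fun a ha => S.exists_approx n hKopen (hA.1 ha) (by linarith)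
    choose! f hf1 hf2 using hap
    have key : ∀ a ∈ A, ∀ b ∈ A, a ≠ b → ε / 2 < S.dN dist n (f a) (f b) := by
      intro a ha b hb hab
      have h₁ : S.dN dist n a b ≤ S.dN dist n (f a) b + ε / 4 :=
        S.dN_le_add hn (hf1 a ha).2 (by linarith) (hf2 a ha)
      have h₂ : S.dN dist n b (f a) ≤ S.dN dist n (f b) (f a) + ε / 4 :=
        S.dN_le_add hn (hf1 b hb).2 (by linarith) (hf2 b hb)
      have h₃ : ε < S.dN dist n a b := hA.2 ha hb hab
      have e1 : S.dN dist n (f a) b = S.dN dist n b (f a) := S.dN_comm n _ _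
      have e2 : S.dN dist n (f b) (f a) = S.dN dist n (f a) (f b) := S.dN_comm n _ _
      linarith
    have hinj : Set.InjOn f A := by
      intro a ha b hb hfe
      by_contra hab
      have hk := key a ha b hb hab
      rw [hfe, S.dN_self] at hk
      linarith
    refine le_iSup₂_of_le (f '' A) ⟨?_, ?_⟩ ?_
    · rintro _ ⟨a, ha, rfl⟩; exact hf1 a ha
    · rintro _ ⟨a, ha, rfl⟩ _ ⟨b, hb, rfl⟩ hne
      exact key a ha b hb fun h => hne (by rw [h])
    · exact hinj.encard_image.ge
  · -- part (c)
    refine le_iInf₂ fun B hB => ?_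
    by_cases hfin : B.Finite
    swap
    · rw [Set.Infinite.encard_eq hfin]; exact le_top
    refine iInf₂_le_of_le B ⟨hB.1.trans hsub, ?_⟩ le_rfl
    intro x hx
    by_contra hcon
    push_neg at hcon
    obtain ⟨z, hz⟩ := (mem_closure_iff.mp hx.2) K hKopen hx.1
    obtain ⟨y0, hy0, _⟩ := hB.2 z hz
    set s : Set ℝ := (fun y => S.dN dist n x y - ε) '' B with hs
    have hsfin : s.Finite := hfin.image _
    have hsne : s.Nonempty := Set.Nonempty.image _ ⟨y0, hy0⟩
    set δ := sInf s with hδdef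
    have hδmem : δ ∈ s := hsne.csInf_mem hsfin
    have hδpos : 0 < δ := by
      obtain ⟨y, hy, hyeq⟩ := hδmem
      have h' := hcon y hy
      have hyeq' : S.dN dist n x y - ε = δ := hyeq
      linarith
    obtain ⟨x', hx'KD, hx'apx⟩ := S.exists_approx n hKopen hx (δ := δ / 2) (by linarith)
    obtain ⟨y, hyB, hyle⟩ := hB.2 x' hx'KD
    have h₁ : S.dN dist n x y ≤ S.dN dist n x' y + δ / 2 :=
      S.dN_le_add hn hx'KD.2 (by linarith) hx'apx
    have h₂ : δ ≤ S.dN dist n x y - ε := csInf_le hsfin.bddBelow ⟨y, hyB, rfl⟩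
    linarith
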